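/- Let K be a p-core CRG at p = 1/4 all of whose vertices are black, all of whose edges are white or gray, and whose gray edges form a linear forest (disjoint union of paths). Let μ be the fully supported optimizer with stationarity condition: for every vertex v, 2μ(v) + 1 − 4g = Σ_{u ∈ NG(v)} μ(u), where g = g_K(1/4) and NG(v) is the gray-neighborhood of v. Then g > 1/4. -/

import Mathlib

open Finset

inductive EColor | white | black | gray
deriving DecidableEq

/-- The `p`-weight of an edge color: `p` for white, `1-p` for black, `0` for gray. -/
def wval (p : ℝ) : EColor → ℝ
  | .white => p
  | .black => 1 - p
  | .gray => 0

/-- The matrix `M_K(p)` of a CRG given by vertex colors `vb` (`true` = black)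
and edge colors `ec`. -/
def Mmat {V : Type*} [DecidableEq V] (vb : V → Bool) (ec : V → V → EColor) (p : ℝ)
    (x y : V) : ℝ :=
  if x = y then (if vb x then 1 - p else p) else wval p (ec x y)

/-- `μ` is a probability mass. -/
def IsProb {V : Type*} [Fintype V] (μ : V → ℝ) : Prop :=
  (∀ x, 0 ≤ μ x) ∧ ∑ x, μ x = 1

/-- The quadratic form `⟨μ, M_K(p) μ⟩`. -/
def QF {V : Type*} [Fintype V] [DecidableEq V] (vb : V → Bool) (ec : V → V → EColor)
    (p : ℝ) (μ : V → ℝ) : ℝ :=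
  ∑ x, ∑ y, μ x * Mmat vb ec p x y * μ y

/-- `g` is the minimum of the quadratic form over probability masses, i.e. `g = g_K(p)`. -/
def gIs {V : Type*} [Fintype V] [DecidableEq V] (vb : V → Bool) (ec : V → V → EColor)
    (p g : ℝ) : Prop :=
  IsLeast {t | ∃ μ : V → ℝ, IsProb μ ∧ t = QF vb ec p μ} g

/-- The weighted gray-degree `d_G(u) = ∑_{v : uv gray} μ(v)`. -/
def grayDeg {V : Type*} [Fintype V] [DecidableEq V] (ec : V → V → EColor) (μ : V → ℝ)
    (u : V) : ℝ :=
  ∑ v ∈ Finset.univ.filter (fun v => v ≠ u ∧ ec u v = EColor.gray), μ v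

/-! Summing the stationarity equation over all `n` vertices gives
`2 + n (1 - 4g) = ∑_u μ(u) |NG(u)|`, and by the handshake count the right side is `< 2`:
every gray degree is at most `2`, and a path endpoint of positive mass has degree at most `1`. -/

def grayNbhd {V : Type*} [Fintype V] [DecidableEq V] (ec : V → V → EColor) (v : V) :
    Finset V :=
  Finset.univ.filter fun u => u ≠ v ∧ ec v u = EColor.gray

section GrayDegree

variable {V : Type*} [Fintype V] [DecidableEq V] {ec : V → V → EColor}

theorem mem_grayNbhd_comm (hsymm : ∀ a b, ec a b = ec b a) (u v : V) :
    u ∈ grayNbhd ec v ↔ v ∈ grayNbhd ec u := by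
  simp only [grayNbhd, mem_filter, mem_univ, true_and, ne_comm, hsymm u v]

theorem sum_grayDeg_eq_sum_mul_card (hsymm : ∀ a b, ec a b = ec b a) (μ : V → ℝ) :
    ∑ v, grayDeg ec μ v = ∑ u, μ u * (grayNbhd ec u).card := by
  calc ∑ v, grayDeg ec μ v = ∑ v, ∑ u ∈ grayNbhd ec v, μ u := rfl
    _ = ∑ u, ∑ _v ∈ grayNbhd ec u, μ u :=
      Finset.sum_comm' fun v u => by simp [mem_grayNbhd_comm hsymm u v]
    _ = ∑ u, μ u * (grayNbhd ec u).card := by simp [mul_comm]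

theorem sum_grayDeg_lt_two (hsymm : ∀ a b, ec a b = ec b a)
    (hdeg : ∀ v, (grayNbhd ec v).card ≤ 2) (hend : ∃ v, (grayNbhd ec v).card ≤ 1)
    {μ : V → ℝ} (hμ : ∑ v, μ v = 1) (hfull : ∀ v, 0 < μ v) :
    ∑ v, grayDeg ec μ v < 2 := by
  obtain ⟨v₀, hv₀⟩ := hend
  rw [sum_grayDeg_eq_sum_mul_card hsymm, ← mul_one 2, ← hμ, Finset.mul_sum]
  refine Finset.sum_lt_sum (fun u _ => ?_) ⟨v₀, mem_univ v₀, ?_⟩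
  · have : ((grayNbhd ec u).card : ℝ) ≤ 2 := by exact_mod_cast hdeg u
    nlinarith [hfull u]
  · have : ((grayNbhd ec v₀).card : ℝ) ≤ 1 := by exact_mod_cast hv₀
    nlinarith [hfull v₀]

end GrayDegree

theorem stmt9_general {V : Type*} [Fintype V] [DecidableEq V]
    (ec : V → V → EColor) (hsymm : ∀ a b, ec a b = ec b a)
    (hdeg : ∀ v, ((Finset.univ.filter fun u => u ≠ v ∧ ec v u = EColor.gray)).card ≤ 2)
    (hend : ∃ v, ((Finset.univ.filter fun u => u ≠ v ∧ ec v u = EColor.gray)).card ≤ 1)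
    (μ : V → ℝ) (g : ℝ) (hμ : IsProb μ) (hfull : ∀ v, 0 < μ v)
    (hstat : ∀ v, 2 * μ v + 1 - 4 * g =
      ∑ u ∈ Finset.univ.filter (fun u => u ≠ v ∧ ec v u = EColor.gray), μ u) :
    1 / 4 < g := by
  have hcard : (0 : ℝ) < Fintype.card V := by
    obtain ⟨v, -⟩ := hend
    exact_mod_cast Fintype.card_pos_iff.mpr ⟨v⟩
  have hsum : ∑ v, grayDeg ec μ v = 2 + Fintype.card V * (1 - 4 * g) := by
    simp only [grayDeg, ← hstat, Finset.sum_sub_distrib, Finset.sum_add_distrib,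
      ← Finset.mul_sum, hμ.2, Finset.sum_const, Finset.card_univ, nsmul_eq_mul]
    ring
  have hlt := sum_grayDeg_lt_two hsymm hdeg hend hμ.2 hfull
  nlinarith

/-- let `K` be a `1/4`-core CRG with all vertices black, all edges white or
gray, whose gray edges form a linear forest (gray-degrees ≤ 2, and some vertex has
gray-degree ≤ 1).  If the fully supported optimizer `μ` satisfies the stationarity
equation `2μ(v) + 1 − 4g = ∑_{u ∈ NG(v)} μ(u)` for every `v`, then `g > 1/4`. -/
theorem stmt9 {V : Type*} [Fintype V] [DecidableEq V] [Nonempty V]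
    (ec : V → V → EColor) (hsymm : ∀ a b, ec a b = ec b a)
    (hnb : ∀ x y, x ≠ y → ec x y ≠ EColor.black)
    (hdeg : ∀ v, ((Finset.univ.filter fun u => u ≠ v ∧ ec v u = EColor.gray)).card ≤ 2)
    (hend : ∃ v, ((Finset.univ.filter fun u => u ≠ v ∧ ec v u = EColor.gray)).card ≤ 1)
    (μ : V → ℝ) (g : ℝ) (hμ : IsProb μ) (hfull : ∀ v, 0 < μ v)
    (hstat : ∀ v, 2 * μ v + 1 - 4 * g =
      ∑ u ∈ Finset.univ.filter (fun u => u ≠ v ∧ ec v u = EColor.gray), μ u) :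
    1 / 4 < g :=
  stmt9_general ec hsymm hdeg hend μ g hμ hfull hstat
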